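/- Fix ℓ ≥ 1. For every partition λ and every i ∈ {0,…,ℓ−1}, the number of addable nodes of λ of content ≡ i (mod ℓ) minus the number of removable nodes of λ of content ≡ i (mod ℓ) equals c_i(λ) − c_{i−1}(λ) + δ, where the index i−1 is taken modulo ℓ and δ = 1 if i = 0 and δ = 0 otherwise. In particular, this difference depends only on core(λ): it is equal for any two partitions with the same ℓ-core. -/

import Mathlib

/-!
Rows of `λ` sit at the positions `k - λ_{k+1}` of the `-1`s of the Maya diagram `m = m(λ)`, and a
node of content `c` is addable exactly when `(m (c - 1), m c) = (1, -1)`, removable exactly when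
`(m (c - 1), m c) = (-1, 1)`. Along the residue class of `i` these two patterns compare the `i`-th
and `(i-1)`-st quotient diagrams, and for any two Maya diagrams `f`, `g` one has
`#{f = -1, g = 1} - #{f = 1, g = -1} = charge f - charge g`. For `i = 0` the `(-1)`-st quotient is
the `(ℓ-1)`-st one shifted by one step, which lowers its charge by one.

The quotients of the function defining `core(λ)` are the vacuum diagrams of charges `c_i(λ)`, so its
total charge is `∑ c_i(λ) = charge m(λ) = 0`. Enumerating its `-1`s shows it is the Maya diagram of
a partition, hence `c_i(core(λ)) = c_i(λ)`, and the first claim transfers along equal cores.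
-/

/-- A partition: a weakly decreasing, eventually zero sequence of naturals;
`part k` is the `(k+1)`-st part `λ_{k+1}`. -/
structure Partition' where
  part : ℕ → ℕ
  antitone : ∀ a b : ℕ, a ≤ b → part b ≤ part a
  eventually_zero : ∃ N, ∀ n, N ≤ n → part n = 0

namespace Wreath

attribute [local instance] Classical.propDecidable

/-- The conjugate partition: `conj lam a = ᵗλ_a` for `a ≥ 1`. -/
noncomputable def conj (lam : Partition') (a : ℕ) : ℕ :=
  Set.ncard {k : ℕ | a ≤ lam.part k}

/-- The Maya diagram of a partition: value `+1` at `j` iff `j = ᵗλ_a − a` for some `a ≥ 1`. -/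
noncomputable def mayaFun (lam : Partition') : ℤ → ℤ := fun j =>
  if ∃ a : ℕ, j = (conj lam (a + 1) : ℤ) - (a + 1 : ℤ) then 1 else -1

/-- `f : ℤ → ℤ` is a Maya diagram: values `±1`, eventually `-1` to the right (large `j`),
eventually `+1` to the left (small `j`). -/
def IsMayaFun (f : ℤ → ℤ) : Prop :=
  (∀ j, f j = 1 ∨ f j = -1) ∧ (∃ N : ℤ, ∀ j, N ≤ j → f j = -1) ∧
    (∃ N : ℤ, ∀ j, j ≤ N → f j = 1)

/-- The charge `#{j < 0 : f j = −1} − #{j ≥ 0 : f j = 1}`. -/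
noncomputable def chargeFun (f : ℤ → ℤ) : ℤ :=
  (Set.ncard {j : ℤ | j < 0 ∧ f j = -1} : ℤ) - (Set.ncard {j : ℤ | 0 ≤ j ∧ f j = 1} : ℤ)

def emptyPartition : Partition' :=
  ⟨fun _ => 0, fun _ _ _ => le_rfl, ⟨0, fun _ _ => rfl⟩⟩

/-- The partition whose Maya diagram is `f` (junk value if there is none). -/
noncomputable def partitionOfMaya (f : ℤ → ℤ) : Partition' :=
  if h : ∃ lam : Partition', mayaFun lam = f then h.choose else emptyPartition

/-- The charge `c_i(λ)` of the `i`-th quotient Maya diagram `j ↦ m(λ)(i + jℓ)`. -/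
noncomputable def chargeQuot (ℓ : ℕ) (lam : Partition') (i : ℤ) : ℤ :=
  chargeFun fun j => mayaFun lam (i + j * (ℓ : ℤ))

/-- The `i`-th quotient component `λ^i`: the partition whose Maya diagram is
`j ↦ m_i(λ)(j − c_i(λ))`. -/
noncomputable def quotComp (ℓ : ℕ) (lam : Partition') (i : ℤ) : Partition' :=
  partitionOfMaya fun j => mayaFun lam (i + (j - chargeQuot ℓ lam i) * (ℓ : ℤ))

/-- The `ℓ`-core of `λ`: the partition whose Maya diagram has value `−1` at `i + jℓ`
(`0 ≤ i < ℓ`) exactly when `j ≥ −c_i(λ)`. -/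
noncomputable def coreOf (ℓ : ℕ) (lam : Partition') : Partition' :=
  partitionOfMaya fun j =>
    if -(chargeQuot ℓ lam (Int.emod j (ℓ : ℤ))) ≤ Int.ediv j (ℓ : ℤ) then -1 else 1

/-- Membership of the node `x = (a,b)` in the Young diagram of `lam`:
`1 ≤ a`, `1 ≤ b`, `a ≤ λ_b`.  The content of `(a,b)` is `b − a`. -/
def Partition.memYD (lam : Partition') (x : ℤ × ℤ) : Prop :=
  1 ≤ x.1 ∧ 1 ≤ x.2 ∧ x.1 ≤ (lam.part (x.2 - 1).toNat : ℤ)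

/-- Containment of Young diagrams. -/
def Sub (lam mu : Partition') : Prop := ∀ x, Partition.memYD lam x → Partition.memYD mu x

/-- Membership in the skew diagram `μ∖λ`. -/
def SkewMem (lam mu : Partition') (x : ℤ × ℤ) : Prop :=
  Partition.memYD mu x ∧ ¬ Partition.memYD lam x

/-- The number of nodes of `μ∖λ`. -/
noncomputable def skewSize (lam mu : Partition') : ℕ := Set.ncard {x | SkewMem lam mu x}

/-- The size `|λ|`. -/
noncomputable def Partition.size (lam : Partition') : ℕ := Set.ncard {x | Partition.memYD lam x}

/-- Edge-adjacency of nodes. -/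
def adjacent (x y : ℤ × ℤ) : Prop :=
  (x.1 = y.1 ∧ (x.2 = y.2 + 1 ∨ y.2 = x.2 + 1)) ∨
  (x.2 = y.2 ∧ (x.1 = y.1 + 1 ∨ y.1 = x.1 + 1))

/-- `μ∖λ` is a border strip: `λ ⊆ μ`, nonempty, connected through edge-adjacent nodes,
and containing no 2×2 block. -/
def IsBorderStrip (lam mu : Partition') : Prop :=
  Sub lam mu ∧ (∃ x, SkewMem lam mu x) ∧
  (∀ x y, SkewMem lam mu x → SkewMem lam mu y →
    Relation.ReflTransGen (fun u v => SkewMem lam mu u ∧ SkewMem lam mu v ∧ adjacent u v) x y) ∧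
  ¬ ∃ a b : ℤ, SkewMem lam mu (a, b) ∧ SkewMem lam mu (a + 1, b) ∧
      SkewMem lam mu (a, b + 1) ∧ SkewMem lam mu (a + 1, b + 1)

/-- An `ℓ`-core: a partition from which no border strip of `ℓ` nodes can be removed. -/
def IsCore (ℓ : ℕ) (lam : Partition') : Prop :=
  ¬ ∃ mu : Partition', IsBorderStrip mu lam ∧ skewSize mu lam = ℓ

/-- Dominance order (on partitions of the same size): `Dom μ λ` means `μ ⊴ λ`. -/
def Dom (mu lam : Partition') : Prop :=
  Partition.size mu = Partition.size lam ∧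
  ∀ k : ℕ, ∑ b ∈ Finset.range k, mu.part b ≤ ∑ b ∈ Finset.range k, lam.part b

/-- `x` is the node of `μ∖λ` of largest content (the initial node of a strip). -/
def IsMaxContentNode (lam mu : Partition') (x : ℤ × ℤ) : Prop :=
  SkewMem lam mu x ∧ ∀ y, SkewMem lam mu y → y.2 - y.1 ≤ x.2 - x.1

/-- `x` is the node of `μ∖λ` of smallest content (the final node of a strip). -/
def IsMinContentNode (lam mu : Partition') (x : ℤ × ℤ) : Prop :=
  SkewMem lam mu x ∧ ∀ y, SkewMem lam mu y → x.2 - x.1 ≤ y.2 - y.1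

/-- Add `1` to each of the first `k` parts (append a column of height `k`). -/
def addColParts (k : ℕ) (f : ℕ → ℕ) : ℕ → ℕ := fun r => if r < k then f r + 1 else f r

/-- The number of (nonzero) rows of a partition. -/
noncomputable def numRows (nu : Partition') : ℕ := Set.ncard {r : ℕ | 0 < nu.part r}

/-- Append a new final row of length `k` after `len` rows. -/
def addRowParts (k len : ℕ) (f : ℕ → ℕ) : ℕ → ℕ :=
  fun r => if r < len then f r else if r = len then k else 0

/-- One column-addition step: `μ` is obtained from `ν` by adding, in component `i` of the
`ℓ`-quotient, a new column of height `k` no taller than any existing column. -/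
def IsColStep (ℓ : ℕ) (nu mu : Partition') (i k : ℕ) : Prop :=
  i < ℓ ∧ 1 ≤ k ∧
  (∀ a : ℕ, 1 ≤ a → (a : ℕ) ≤ (quotComp ℓ nu (i : ℤ)).part 0 →
    k ≤ conj (quotComp ℓ nu (i : ℤ)) a) ∧
  coreOf ℓ mu = coreOf ℓ nu ∧
  (∀ i' : ℕ, i' < ℓ → i' ≠ i → quotComp ℓ mu (i' : ℤ) = quotComp ℓ nu (i' : ℤ)) ∧
  (quotComp ℓ mu (i : ℤ)).part = addColParts k ((quotComp ℓ nu (i : ℤ)).part)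

/-- One row-addition step: `μ` is obtained from `ν` by adding, in component `i` of the
`ℓ`-quotient, a new final row of length `k` no longer than any existing row. -/
def IsRowStep (ℓ : ℕ) (nu mu : Partition') (i k : ℕ) : Prop :=
  i < ℓ ∧ 1 ≤ k ∧
  (∀ r : ℕ, 0 < (quotComp ℓ nu (i : ℤ)).part r → k ≤ (quotComp ℓ nu (i : ℤ)).part r) ∧
  coreOf ℓ mu = coreOf ℓ nu ∧
  (∀ i' : ℕ, i' < ℓ → i' ≠ i → quotComp ℓ mu (i' : ℤ) = quotComp ℓ nu (i' : ℤ)) ∧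
  (quotComp ℓ mu (i : ℤ)).part =
    addRowParts k (numRows (quotComp ℓ nu (i : ℤ))) ((quotComp ℓ nu (i : ℤ)).part)

/-- A column-addition sequence for `λ`. -/
def IsColSeq (ℓ : ℕ) (lam : Partition') (N : ℕ) (seq : ℕ → Partition') : Prop :=
  seq 0 = coreOf ℓ lam ∧ seq N = lam ∧
  ∀ t, t < N → ∃ i k, IsColStep ℓ (seq t) (seq (t + 1)) i k

/-- A row-addition sequence for `λ`. -/
def IsRowSeq (ℓ : ℕ) (lam : Partition') (N : ℕ) (seq : ℕ → Partition') : Prop :=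
  seq 0 = coreOf ℓ lam ∧ seq N = lam ∧
  ∀ t, t < N → ∃ i k, IsRowStep ℓ (seq t) (seq (t + 1)) i k

/-- Left-to-right order on a column-addition sequence: for `1 ≤ r < s ≤ N` the content of the
initial node of the `r`-th strip is strictly greater than the content of the final node of the
`s`-th strip. -/
def LeftToRight (N : ℕ) (seq : ℕ → Partition') : Prop :=
  ∀ r s, 1 ≤ r → r < s → s ≤ N → ∀ x y,
    IsMaxContentNode (seq (r - 1)) (seq r) x →
    IsMinContentNode (seq (s - 1)) (seq s) y →
    y.2 - y.1 < x.2 - x.1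

/-- Right-to-left order on a row-addition sequence: for `1 ≤ r < s ≤ N` the content of the
final node of the `r`-th strip is strictly less than the content of the final node of the
`s`-th strip. -/
def RightToLeft (N : ℕ) (seq : ℕ → Partition') : Prop :=
  ∀ r s, 1 ≤ r → r < s → s ≤ N → ∀ x y,
    IsMinContentNode (seq (r - 1)) (seq r) x →
    IsMinContentNode (seq (s - 1)) (seq s) y →
    x.2 - x.1 < y.2 - y.1

/-- `x` is an addable node of `λ`. -/
def Addable (lam : Partition') (x : ℤ × ℤ) : Prop :=
  ¬ Partition.memYD lam x ∧
    ∃ mu : Partition', ∀ y, Partition.memYD mu y ↔ (Partition.memYD lam y ∨ y = x)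

/-- `x` is a removable node of `λ`. -/
def Removable (lam : Partition') (x : ℤ × ℤ) : Prop :=
  Partition.memYD lam x ∧
    ∃ mu : Partition', ∀ y, Partition.memYD mu y ↔ (Partition.memYD lam y ∧ y ≠ x)

end Wreath

open Wreath

namespace Wreath

open Finset Filter

lemma lt_conj_succ_iff (lam : Partition') (a k : ℕ) : k < conj lam (a + 1) ↔ a < lam.part k := by
  have hex : ∃ n, lam.part n ≤ a := by
    obtain ⟨N, hN⟩ := lam.eventually_zero
    exact ⟨N, by simp [hN N le_rfl]⟩
  have hset : {k : ℕ | a + 1 ≤ lam.part k} = Set.Iio (Nat.find hex) := by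
    ext m
    simp only [Set.mem_ofPred_eq, Set.mem_Iio, Nat.lt_find_iff, not_le]
    exact ⟨fun hm n hn => lt_of_lt_of_le hm (lam.antitone n m hn), fun hm => hm m le_rfl⟩
  rw [conj, hset, Set.ncard_Iio_nat, Nat.lt_find_iff]
  exact ⟨fun h => not_le.mp (h k le_rfl),
    fun h n hn => not_le.mpr (h.trans_le (lam.antitone n k hn))⟩

def rowPos (lam : Partition') (k : ℕ) : ℤ := k - lam.part k

lemma rowPos_strictMono (lam : Partition') : StrictMono (rowPos lam) := by
  refine strictMono_nat_of_lt_succ fun k => ?_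
  have := lam.antitone k (k + 1) k.le_succ
  simp only [rowPos]
  omega

lemma mayaFun_eq_neg_one_iff (lam : Partition') (j : ℤ) :
    mayaFun lam j = -1 ↔ j ∈ Set.range (rowPos lam) := by
  simp only [mayaFun, ite_eq_right_iff, reduceCtorEq, imp_false, not_exists, Set.mem_range]
  constructor
  · intro hcol
    by_contra! hrow
    have hex : ∃ k, j ≤ rowPos lam k := by
      refine ⟨(j + lam.part 0).toNat, ?_⟩
      have := lam.antitone 0 (j + lam.part 0).toNat (Nat.zero_le _)
      simp only [rowPos]
      omega
    -- `n` is the first row whose position lies beyond `j`; the column `a + 1` then has height `n`.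
    set n := Nat.find hex
    have hn : j < rowPos lam n := (Nat.find_spec hex).lt_of_ne (hrow n).symm
    have hbefore : ∀ k < n, rowPos lam k < j := fun k hk => not_le.mp (Nat.find_min hex hk)
    set a := (n - 1 - j).toNat
    have hconj : conj lam (a + 1) = n := by
      refine eq_of_forall_lt_iff fun k => ?_
      rw [lt_conj_succ_iff]
      constructor
      · intro hak
        by_contra hkn
        have := lam.antitone n k (not_lt.mp hkn)
        simp only [rowPos] at hn
        omega
      · intro hkn
        have hk := hbefore (n - 1) (by omega)
        have := lam.antitone k (n - 1) (by omega)
        simp only [rowPos] at hk hn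
        omega
    apply hcol a
    simp only [rowPos] at hn
    omega
  · rintro ⟨k, rfl⟩ a heq
    by_cases hak : a < lam.part k
    · have := (lt_conj_succ_iff lam a k).mpr hak
      simp only [rowPos] at heq
      omega
    · have := mt (lt_conj_succ_iff lam a k).mp hak
      simp only [rowPos] at heq
      omega

lemma mayaFun_eq_one_or_eq_neg_one (lam : Partition') (j : ℤ) :
    mayaFun lam j = 1 ∨ mayaFun lam j = -1 := by
  unfold mayaFun
  split_ifs <;> simp

lemma mayaFun_eq_one_iff (lam : Partition') (j : ℤ) :
    mayaFun lam j = 1 ↔ j ∉ Set.range (rowPos lam) := by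
  rw [← mayaFun_eq_neg_one_iff]
  rcases mayaFun_eq_one_or_eq_neg_one lam j with h | h <;> simp [h]

lemma memYD_iff (lam : Partition') (x : ℤ × ℤ) :
    Partition.memYD lam x ↔ ∃ b : ℕ, x.2 = b + 1 ∧ 1 ≤ x.1 ∧ x.1 ≤ lam.part b := by
  unfold Partition.memYD
  constructor
  · rintro ⟨h1, h2, h3⟩
    exact ⟨(x.2 - 1).toNat, by omega, h1, h3⟩
  · rintro ⟨b, hb, h1, h3⟩
    rw [hb, show ((b : ℤ) + 1 - 1).toNat = b by omega]
    exact ⟨h1, by omega, h3⟩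

def updatePart (lam : Partition') (b v : ℕ) (hnext : lam.part (b + 1) ≤ v)
    (hprev : ∀ k, k + 1 = b → v ≤ lam.part k) : Partition' where
  part := Function.update lam.part b v
  antitone := by
    refine fun m n hmn => antitone_nat_of_succ_le (fun k => ?_) hmn
    have h := lam.antitone k (k + 1) k.le_succ
    rcases eq_or_ne k b with rfl | hkb
    · simpa using hnext
    · rcases eq_or_ne (k + 1) b with rfl | hkb'
      · simpa using hprev k rfl
      · simpa [Function.update_of_ne hkb, Function.update_of_ne hkb'] using h
  eventually_zero := by
    obtain ⟨N, hN⟩ := lam.eventually_zero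
    exact ⟨max N (b + 1), fun n hn => by
      rw [Function.update_of_ne (by omega)]; exact hN n (by omega)⟩

lemma memYD_updatePart_iff {lam : Partition'} {b v : ℕ} {hnext hprev} (x : ℤ × ℤ) :
    Partition.memYD (updatePart lam b v hnext hprev) x ↔
      if x.2 = b + 1 then 1 ≤ x.1 ∧ x.1 ≤ v else Partition.memYD lam x := by
  simp only [memYD_iff, updatePart]
  split_ifs with hx
  · constructor
    · rintro ⟨c, hc, h1, h2⟩
      obtain rfl : c = b := by omega
      simpa using And.intro h1 h2
    · rintro ⟨h1, h2⟩
      exact ⟨b, hx, h1, by simpa using h2⟩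
  · refine exists_congr fun c => and_congr_right fun hc => ?_
    rw [Function.update_of_ne (by omega)]

lemma addable_of_lt {lam : Partition'} {b : ℕ} (hprev : ∀ k, k + 1 = b → lam.part b < lam.part k) :
    Addable lam ((lam.part b : ℤ) + 1, (b : ℤ) + 1) := by
  refine ⟨fun h => ?_, updatePart lam b (lam.part b + 1)
    (by have := lam.antitone b (b + 1); omega) hprev, fun y => ?_⟩
  · obtain ⟨c, hc, -, hc'⟩ := (memYD_iff lam _).mp h
    obtain rfl : c = b := by simp at hc; omega
    simp at hc'
  · rw [memYD_updatePart_iff, memYD_iff]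
    split_ifs with hy
    · constructor
      · intro h
        by_cases h' : y.1 = lam.part b + 1
        · exact Or.inr (Prod.ext h' hy)
        · exact Or.inl ⟨b, hy, h.1, by omega⟩
      · rintro (⟨c, hc, h1, h2⟩ | rfl)
        · obtain rfl : c = b := by omega
          omega
        · simp
    · rw [← memYD_iff]
      exact ⟨Or.inl, fun h => h.resolve_right fun h' => hy (by rw [h'])⟩

lemma Addable.exists_eq {lam : Partition'} {x : ℤ × ℤ} (hx : Addable lam x) :
    ∃ b : ℕ, x = ((lam.part b : ℤ) + 1, (b : ℤ) + 1) ∧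
      ∀ k, k + 1 = b → lam.part b < lam.part k := by
  obtain ⟨hx, mu, hmu⟩ := hx
  obtain ⟨b, hb, h1, hmax⟩ := (memYD_iff mu x).mp ((hmu x).mpr (Or.inr rfl))
  have hout : (lam.part b : ℤ) < x.1 := by
    by_contra! h
    exact hx ((memYD_iff lam x).mpr ⟨b, hb, h1, h⟩)
  -- the nodes left of and above `x` lie in `mu`, and differ from `x`, so they lie in `lam`
  have hleft : x.1 = 1 ∨ x.1 - 1 ≤ lam.part b := by
    by_cases hx1 : x.1 = 1
    · exact Or.inl hx1
    · have h := (hmu (x.1 - 1, x.2)).mp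
        ((memYD_iff mu _).mpr ⟨b, hb, by simp; omega, by simp; omega⟩)
      rcases h with h | h
      · obtain ⟨c, hc, -, hc'⟩ := (memYD_iff lam _).mp h
        obtain rfl : c = b := by simp at hc; omega
        exact Or.inr hc'
      · simp [Prod.ext_iff] at h
  refine ⟨b, Prod.ext (by omega) hb, fun k hk => ?_⟩
  have hmono := mu.antitone k b (by omega)
  have h := (hmu (x.1, k + 1)).mp ((memYD_iff mu _).mpr ⟨k, rfl, h1, by omega⟩)
  rcases h with h | h
  · obtain ⟨c, hc, -, hc'⟩ := (memYD_iff lam _).mp h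
    obtain rfl : c = k := by simp at hc; omega
    omega
  · simp only [Prod.ext_iff] at h
    omega

lemma addable_iff (lam : Partition') (x : ℤ × ℤ) :
    Addable lam x ↔ ∃ b : ℕ, x = ((lam.part b : ℤ) + 1, (b : ℤ) + 1) ∧
      ∀ k, k + 1 = b → lam.part b < lam.part k :=
  ⟨Addable.exists_eq, fun ⟨_, hx, hprev⟩ => hx ▸ addable_of_lt hprev⟩

lemma removable_of_lt {lam : Partition'} {b : ℕ} (hlt : lam.part (b + 1) < lam.part b) :
    Removable lam ((lam.part b : ℤ), (b : ℤ) + 1) := by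
  refine ⟨(memYD_iff lam _).mpr ⟨b, rfl, by simp; omega, le_rfl⟩,
    updatePart lam b (lam.part b - 1) (by omega)
      (fun k hk => by have := lam.antitone k b (by omega); omega), fun y => ?_⟩
  rw [memYD_updatePart_iff, memYD_iff]
  split_ifs with hy
  · constructor
    · rintro ⟨h1, h2⟩
      exact ⟨⟨b, hy, h1, by omega⟩, fun h => by rw [h] at h2; simp at h2; omega⟩
    · rintro ⟨⟨c, hc, h1, h2⟩, hne⟩
      obtain rfl : c = b := by omega
      refine ⟨h1, ?_⟩
      have : y.1 ≠ lam.part c := fun h => hne (Prod.ext h hy)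
      omega
  · rw [← memYD_iff]
    exact ⟨fun h => ⟨h, fun h' => hy (by rw [h'])⟩, And.left⟩

lemma Removable.exists_eq {lam : Partition'} {x : ℤ × ℤ} (hx : Removable lam x) :
    ∃ b : ℕ, x = ((lam.part b : ℤ), (b : ℤ) + 1) ∧ lam.part (b + 1) < lam.part b := by
  obtain ⟨hx, mu, hmu⟩ := hx
  obtain ⟨b, hb, h1, hle⟩ := (memYD_iff lam x).mp hx
  have hxmu : ¬ Partition.memYD mu x := fun h => ((hmu x).mp h).2 rfl
  -- a node of `lam` right of or below `x` would survive in `mu` and force `x ∈ mu`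
  have hsurvive : ∀ y : ℤ × ℤ, Partition.memYD lam y → y ≠ x → ∀ c : ℕ, y.2 = c + 1 →
      b ≤ c → x.1 ≤ y.1 → False := by
    intro y hy hyx c hc hbc hxy
    obtain ⟨c', hc', -, hle'⟩ := (memYD_iff mu y).mp ((hmu y).mpr ⟨hy, hyx⟩)
    obtain rfl : c' = c := by omega
    exact hxmu ((memYD_iff mu x).mpr ⟨b, hb, h1, by have := mu.antitone b c' hbc; omega⟩)
  have hx1 : x.1 = lam.part b := by
    by_contra hne
    exact hsurvive (x.1 + 1, x.2) ((memYD_iff lam _).mpr ⟨b, hb, by simp; omega, by simp; omega⟩)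
      (by simp [Prod.ext_iff]) b hb le_rfl (by simp)
  refine ⟨b, Prod.ext hx1 hb, ?_⟩
  by_contra! hge
  exact hsurvive (x.1, x.2 + 1) ((memYD_iff lam _).mpr ⟨b + 1, by simp [hb], h1, by omega⟩)
    (by simp [Prod.ext_iff]) (b + 1) (by simp [hb]) b.le_succ le_rfl

lemma removable_iff (lam : Partition') (x : ℤ × ℤ) :
    Removable lam x ↔ ∃ b : ℕ, x = ((lam.part b : ℤ), (b : ℤ) + 1) ∧
      lam.part (b + 1) < lam.part b :=
  ⟨Removable.exists_eq, fun ⟨_, hx, hlt⟩ => hx ▸ removable_of_lt hlt⟩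

lemma content_injOn_addable (lam : Partition') :
    Set.InjOn (fun x : ℤ × ℤ => x.2 - x.1) {x | Addable lam x} := by
  intro x hx y hy hxy
  obtain ⟨b, rfl, -⟩ := (addable_iff lam x).mp hx
  obtain ⟨c, rfl, -⟩ := (addable_iff lam y).mp hy
  obtain rfl : b = c := (rowPos_strictMono lam).injective (by simp only [rowPos] at hxy ⊢; omega)
  rfl

lemma content_injOn_removable (lam : Partition') :
    Set.InjOn (fun x : ℤ × ℤ => x.2 - x.1) {x | Removable lam x} := by
  intro x hx y hy hxy
  obtain ⟨b, rfl, -⟩ := (removable_iff lam x).mp hx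
  obtain ⟨c, rfl, -⟩ := (removable_iff lam y).mp hy
  obtain rfl : b = c := (rowPos_strictMono lam).injective (by simp only [rowPos] at hxy ⊢; omega)
  rfl

lemma content_image_addable (lam : Partition') :
    (fun x : ℤ × ℤ => x.2 - x.1) '' {x | Addable lam x} =
      {c | mayaFun lam c = -1 ∧ mayaFun lam (c - 1) = 1} := by
  have hmono := rowPos_strictMono lam
  ext c
  simp only [Set.mem_image, Set.mem_ofPred_eq, addable_iff, mayaFun_eq_neg_one_iff,
    mayaFun_eq_one_iff, Set.mem_range]
  constructor
  · rintro ⟨x, ⟨b, rfl, hprev⟩, rfl⟩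
    refine ⟨⟨b, by simp [rowPos]⟩, ?_⟩
    rintro ⟨k, hk⟩
    have hkb : k < b := hmono.lt_iff_lt.mp (by simp only [rowPos] at hk ⊢; omega)
    have := hmono.monotone (show k ≤ b - 1 by omega)
    have := hprev (b - 1) (by omega)
    simp only [rowPos] at *
    rw [show ((b - 1 : ℕ) : ℤ) = b - 1 by omega] at *
    omega
  · rintro ⟨⟨b, rfl⟩, hprev⟩
    refine ⟨_, ⟨b, rfl, fun k hk => ?_⟩, by simp [rowPos]⟩
    have := lam.antitone k b (by omega)
    by_contra hge
    exact hprev ⟨k, by simp only [rowPos]; omega⟩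

lemma content_image_removable (lam : Partition') :
    (fun x : ℤ × ℤ => x.2 - x.1) '' {x | Removable lam x} =
      {c | mayaFun lam c = 1 ∧ mayaFun lam (c - 1) = -1} := by
  have hmono := rowPos_strictMono lam
  ext c
  simp only [Set.mem_image, Set.mem_ofPred_eq, removable_iff, mayaFun_eq_neg_one_iff,
    mayaFun_eq_one_iff, Set.mem_range]
  constructor
  · rintro ⟨x, ⟨b, rfl, hnext⟩, rfl⟩
    refine ⟨?_, ⟨b, by simp [rowPos]; ring⟩⟩
    rintro ⟨k, hk⟩
    have hbk : b < k := hmono.lt_iff_lt.mp (by simp only [rowPos] at hk ⊢; omega)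
    have := hmono.monotone (show b + 1 ≤ k by omega)
    simp only [rowPos] at *
    push_cast at *
    omega
  · rintro ⟨hnext, ⟨b, hb⟩⟩
    refine ⟨_, ⟨b, rfl, ?_⟩, by simp only [rowPos] at hb; omega⟩
    have := lam.antitone b (b + 1) b.le_succ
    by_contra hge
    exact hnext ⟨b + 1, by simp only [rowPos] at hb ⊢; push_cast; omega⟩

def IsMayaWindow (f : ℤ → ℤ) (M : ℤ) : Prop :=
  (∀ j, M ≤ j → f j = -1) ∧ ∀ j, j < -M → f j = 1

lemma IsMayaWindow.mono {f : ℤ → ℤ} {M N : ℤ} (h : IsMayaWindow f M) (hMN : M ≤ N) :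
    IsMayaWindow f N :=
  ⟨fun j hj => h.1 j (by omega), fun j hj => h.2 j (by omega)⟩

lemma isMayaFun_iff {f : ℤ → ℤ} :
    IsMayaFun f ↔ (∀ j, f j = 1 ∨ f j = -1) ∧ ∀ᶠ M in atTop, IsMayaWindow f M := by
  refine and_congr_right fun _ => ⟨?_, fun h => ?_⟩
  · rintro ⟨⟨N, hN⟩, ⟨N', hN'⟩⟩
    exact eventually_atTop.mpr ⟨max N (-N'), fun M hM =>
      ⟨fun j hj => hN j (by omega), fun j hj => hN' j (by omega)⟩⟩
  · obtain ⟨M, hM⟩ := h.exists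
    exact ⟨⟨M, hM.1⟩, ⟨-M - 1, fun j hj => hM.2 j (by omega)⟩⟩

lemma IsMayaFun.eventually_isMayaWindow {f : ℤ → ℤ} (hf : IsMayaFun f) :
    ∀ᶠ M in atTop, 0 ≤ M ∧ IsMayaWindow f M :=
  (eventually_ge_atTop 0).and (isMayaFun_iff.mp hf).2

lemma chargeFun_eq_card_filter_sub {f : ℤ → ℤ} {M : ℤ} (hv : ∀ j, f j = 1 ∨ f j = -1)
    (hM : IsMayaWindow f M) (hM0 : 0 ≤ M) :
    chargeFun f = #{j ∈ Ico (-M) M | f j = -1} - M := by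
  have hneg : {j : ℤ | j < 0 ∧ f j = -1} = ↑{j ∈ Ico (-M) 0 | f j = -1} := by
    ext j
    simp only [Set.mem_ofPred_eq, coe_filter, mem_Ico]
    exact ⟨fun h => ⟨⟨not_lt.mp fun hj => by simp [hM.2 j hj] at h, h.1⟩, h.2⟩,
      fun h => ⟨h.1.2, h.2⟩⟩
  have hpos : {j : ℤ | 0 ≤ j ∧ f j = 1} = ↑{j ∈ Ico 0 M | ¬ f j = -1} := by
    ext j
    simp only [Set.mem_ofPred_eq, coe_filter, mem_Ico]
    refine ⟨fun h => ⟨⟨h.1, not_le.mp fun hj => by simp [hM.1 j hj] at h⟩, by simp [h.2]⟩,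
      fun h => ⟨h.1.1, (hv j).resolve_right h.2⟩⟩
  have hsplit : #{j ∈ Ico (-M) M | f j = -1} =
      #{j ∈ Ico (-M) 0 | f j = -1} + #{j ∈ Ico 0 M | f j = -1} := by
    rw [← Ico_union_Ico_eq_Ico (by omega) hM0, filter_union,
      card_union_of_disjoint (disjoint_filter_filter (Ico_disjoint_Ico_consecutive _ _ _))]
  have hcompl := card_filter_add_card_filter_not (s := Ico 0 M) (fun j => f j = -1)
  rw [Int.card_Ico] at hcompl
  rw [chargeFun, hneg, hpos, Set.ncard_coe_finset, Set.ncard_coe_finset, hsplit]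
  omega

lemma two_mul_chargeFun_eq_neg_sum {f : ℤ → ℤ} {M : ℤ} (hv : ∀ j, f j = 1 ∨ f j = -1)
    (hM : IsMayaWindow f M) (hM0 : 0 ≤ M) :
    2 * chargeFun f = -∑ j ∈ Ico (-M) M, f j := by
  have hf : ∀ j, f j = 1 - 2 * if f j = -1 then 1 else 0 := fun j => by
    rcases hv j with h | h <;> simp [h]
  rw [chargeFun_eq_card_filter_sub hv hM hM0, sum_congr rfl fun j _ => hf j, sum_sub_distrib,
    ← mul_sum, sum_boole, sum_const, Int.card_Ico]
  simp only [nsmul_eq_mul, mul_one]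
  omega

lemma ncard_sub_ncard_eq_chargeFun_sub {f g : ℤ → ℤ} (hf : IsMayaFun f) (hg : IsMayaFun g) :
    ({j | f j = -1 ∧ g j = 1}.ncard : ℤ) - {j | f j = 1 ∧ g j = -1}.ncard =
      chargeFun f - chargeFun g := by
  obtain ⟨M, ⟨hM0, hfM⟩, -, hgM⟩ :=
    (hf.eventually_isMayaWindow.and hg.eventually_isMayaWindow).exists
  have hwindow : ∀ {a b : ℤ}, a ≠ b →
      {j | f j = a ∧ g j = b} = ↑{j ∈ Ico (-M) M | f j = a ∧ g j = b} := by
    intro a b hab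
    ext j
    simp only [Set.mem_ofPred_eq, coe_filter, mem_Ico]
    refine ⟨fun h => ⟨⟨not_lt.mp fun hj => ?_, not_le.mp fun hj => ?_⟩, h⟩, And.right⟩
    · exact hab (by rw [← h.1, ← h.2, hfM.2 j hj, hgM.2 j hj])
    · exact hab (by rw [← h.1, ← h.2, hfM.1 j hj, hgM.1 j hj])
  have hpoint : ∀ j, 2 * ((if f j = -1 ∧ g j = 1 then 1 else 0) -
      (if f j = 1 ∧ g j = -1 then 1 else 0) : ℤ) = g j - f j := fun j => by
    rcases hf.1 j with h | h <;> rcases hg.1 j with h' | h' <;> simp [h, h']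
  rw [hwindow (by norm_num), hwindow (by norm_num), Set.ncard_coe_finset, Set.ncard_coe_finset]
  have := two_mul_chargeFun_eq_neg_sum hf.1 hfM hM0
  have := two_mul_chargeFun_eq_neg_sum hg.1 hgM hM0
  have h2 : 2 * ((#{j ∈ Ico (-M) M | f j = -1 ∧ g j = 1} : ℤ) -
      #{j ∈ Ico (-M) M | f j = 1 ∧ g j = -1}) = ∑ j ∈ Ico (-M) M, g j - ∑ j ∈ Ico (-M) M, f j := by
    rw [← sum_boole, ← sum_boole, ← sum_sub_distrib, mul_sum, ← sum_sub_distrib]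
    exact sum_congr rfl fun j _ => hpoint j
  linarith

lemma chargeFun_comp_sub_one {f : ℤ → ℤ} (hf : IsMayaFun f) :
    chargeFun (fun j => f (j - 1)) = chargeFun f - 1 := by
  obtain ⟨M, hM0, hM⟩ := hf.eventually_isMayaWindow.exists
  have hshift : 2 * chargeFun (fun j => f (j - 1)) = -∑ j ∈ Ico (-(M + 2)) M, f j := by
    rw [two_mul_chargeFun_eq_neg_sum (fun j => hf.1 (j - 1))
      ⟨fun j hj => hM.1 _ (by omega), fun j hj => hM.2 _ (by omega)⟩ (by omega : 0 ≤ M + 1)]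
    simp only [sub_eq_add_neg, sum_Ico_add']
    ring_nf
  have htail : ∑ j ∈ Ico M (M + 2), f j = -2 := by
    rw [sum_congr rfl fun j hj => hM.1 j (mem_Ico.mp hj).1, sum_const, Int.card_Ico]
    simp [show M + 2 - M = 2 by ring]
  have hfull := two_mul_chargeFun_eq_neg_sum hf.1 (hM.mono (by omega : M ≤ M + 2)) (by omega)
  rw [← Ico_union_Ico_eq_Ico (by omega : -(M + 2) ≤ M) (by omega : M ≤ M + 2),
    sum_union (Ico_disjoint_Ico_consecutive _ _ _), htail] at hfull
  linarith

def quotFun (f : ℤ → ℤ) (ℓ : ℕ) (i : ℤ) : ℤ → ℤ := fun j => f (i + j * ℓ)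

lemma IsMayaWindow.quotFun {f : ℤ → ℤ} {M : ℤ} (h : IsMayaWindow f M) (hM0 : 0 ≤ M) {ℓ : ℕ}
    (hℓ : 0 < ℓ) (i : ℤ) : IsMayaWindow (quotFun f ℓ i) (M + |i|) := by
  have hℓ' : (1 : ℤ) ≤ ℓ := by exact_mod_cast hℓ
  refine ⟨fun j hj => h.1 _ ?_, fun j hj => h.2 _ ?_⟩
  · have : j ≤ j * ℓ := le_mul_of_one_le_right (by have := abs_nonneg i; omega) hℓ'
    have := neg_abs_le i
    omega
  · have : j * ℓ ≤ j := mul_le_of_one_le_right (by have := abs_nonneg i; omega) hℓ'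
    have := le_abs_self i
    omega

lemma IsMayaFun.quotFun {f : ℤ → ℤ} (hf : IsMayaFun f) {ℓ : ℕ} (hℓ : 0 < ℓ) (i : ℤ) :
    IsMayaFun (quotFun f ℓ i) := by
  obtain ⟨M, hM0, hM⟩ := hf.eventually_isMayaWindow.exists
  exact isMayaFun_iff.mpr ⟨fun j => hf.1 _,
    eventually_atTop.mpr ⟨M + |i|, fun N hN => (hM.quotFun hM0 hℓ i).mono hN⟩⟩

lemma apply_eq_quotFun (f : ℤ → ℤ) {ℓ : ℕ} (hℓ : 0 < ℓ) (j : ℤ) :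
    f j = quotFun f ℓ ((j % ℓ).toNat : ℕ) (j / ℓ) := by
  rw [quotFun, Int.toNat_of_nonneg (Int.emod_nonneg _ (by omega)), Int.emod_add_ediv_mul]

lemma isMayaFun_of_forall_quotFun {f : ℤ → ℤ} {ℓ : ℕ} (hℓ : 0 < ℓ)
    (h : ∀ i ∈ range ℓ, IsMayaFun (quotFun f ℓ i)) : IsMayaFun f := by
  have hℓ' : (0 : ℤ) < ℓ := by exact_mod_cast hℓ
  have hrange : ∀ j : ℤ, (j % ℓ).toNat ∈ range ℓ := fun j => by
    have := Int.emod_lt_of_pos j hℓ'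
    simp only [mem_range]
    omega
  obtain ⟨M, hM⟩ := ((eventually_all_finset _).mpr fun i hi =>
    (h i hi).eventually_isMayaWindow).exists
  refine isMayaFun_iff.mpr ⟨fun j => apply_eq_quotFun f hℓ j ▸ (h _ (hrange j)).1 _,
    eventually_atTop.mpr ⟨M * ℓ, fun N hN => ⟨fun j hj => ?_, fun j hj => ?_⟩⟩⟩ <;>
    obtain ⟨hM0, hMw⟩ := hM _ (hrange j) <;> rw [apply_eq_quotFun f hℓ j]
  · exact hMw.1 _ ((Int.le_ediv_iff_mul_le hℓ').mpr (by omega))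
  · refine hMw.2 _ ((Int.ediv_lt_iff_lt_mul hℓ').mpr ?_)
    have : M ≤ M * ℓ := le_mul_of_one_le_right hM0 (by omega)
    nlinarith

lemma sum_Ico_mul_eq_sum_range_sum_Ico {β : Type*} [AddCommMonoid β] (g : ℤ → β) (a b : ℤ)
    {ℓ : ℕ} (hℓ : 0 < ℓ) :
    ∑ c ∈ Ico (a * ℓ) (b * ℓ), g c = ∑ i ∈ range ℓ, ∑ j ∈ Ico a b, g (i + j * ℓ) := by
  have hℓ' : (0 : ℤ) < ℓ := by exact_mod_cast hℓ
  rw [← sum_product', eq_comm]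
  refine sum_nbij' (fun p => p.1 + p.2 * ℓ) (fun c => ((c % ℓ).toNat, c / ℓ)) ?_ ?_ ?_ ?_
    (fun _ _ => rfl)
  · rintro ⟨i, j⟩ hij
    simp only [mem_product, mem_range, mem_Ico] at hij ⊢
    constructor <;> nlinarith
  · intro c hc
    simp only [mem_product, mem_range, mem_Ico] at hc ⊢
    refine ⟨by have := Int.emod_lt_of_pos c hℓ'; omega,
      (Int.le_ediv_iff_mul_le hℓ').mpr hc.1, (Int.ediv_lt_iff_lt_mul hℓ').mpr hc.2⟩
  · rintro ⟨i, j⟩ hij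
    simp only [mem_product, mem_range] at hij
    have hi : ((i : ℤ) + j * ℓ) % ℓ = i := by
      rw [Int.add_mul_emod_self_right]; exact Int.emod_eq_of_lt (by omega) (by omega)
    have hj : ((i : ℤ) + j * ℓ) / ℓ = j := by
      rw [Int.add_mul_ediv_right _ _ hℓ'.ne', Int.ediv_eq_zero_of_lt (by omega) (by omega),
        zero_add]
    simp [hi, hj]
  · intro c _
    simp only
    rw [Int.toNat_of_nonneg (Int.emod_nonneg _ hℓ'.ne'), Int.emod_add_ediv_mul]

lemma chargeFun_eq_sum_chargeFun_quotFun {f : ℤ → ℤ} (hf : IsMayaFun f) {ℓ : ℕ} (hℓ : 0 < ℓ) :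
    chargeFun f = ∑ i ∈ range ℓ, chargeFun (quotFun f ℓ i) := by
  obtain ⟨M, hM0, hM⟩ := hf.eventually_isMayaWindow.exists
  set N := M + ℓ
  have hquot : ∀ i ∈ range ℓ, 2 * chargeFun (quotFun f ℓ i) = -∑ j ∈ Ico (-N) N, f (i + j * ℓ) := by
    intro i hi
    have : |(i : ℤ)| ≤ ℓ := by rw [abs_of_nonneg (by positivity)]; simp at hi; omega
    exact two_mul_chargeFun_eq_neg_sum (hf.quotFun hℓ i).1 ((hM.quotFun hM0 hℓ i).mono (by omega))
      (by omega)
  have hNℓ : M ≤ N * ℓ := by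
    have : N ≤ N * ℓ := le_mul_of_one_le_right (by omega) (by exact_mod_cast hℓ)
    omega
  have hfull := two_mul_chargeFun_eq_neg_sum hf.1 (hM.mono hNℓ) (by omega)
  rw [← neg_mul, sum_Ico_mul_eq_sum_range_sum_Ico _ _ _ hℓ] at hfull
  have h2 : 2 * chargeFun f = 2 * ∑ i ∈ range ℓ, chargeFun (quotFun f ℓ i) := by
    rw [hfull, mul_sum, sum_congr rfl hquot, sum_neg_distrib]
  omega

def vacuumMaya (c : ℤ) : ℤ → ℤ := fun j => if -c ≤ j then -1 else 1

lemma vacuumMaya_eq_one_or_eq_neg_one (c j : ℤ) : vacuumMaya c j = 1 ∨ vacuumMaya c j = -1 := by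
  unfold vacuumMaya
  split_ifs <;> simp

lemma isMayaWindow_vacuumMaya (c : ℤ) : IsMayaWindow (vacuumMaya c) |c| := by
  have := le_abs_self c
  have := neg_abs_le c
  refine ⟨fun j hj => if_pos (by omega), fun j hj => if_neg (by omega)⟩

lemma isMayaFun_vacuumMaya (c : ℤ) : IsMayaFun (vacuumMaya c) :=
  isMayaFun_iff.mpr ⟨vacuumMaya_eq_one_or_eq_neg_one c,
    eventually_atTop.mpr ⟨|c|, fun _ hN => (isMayaWindow_vacuumMaya c).mono hN⟩⟩

lemma chargeFun_vacuumMaya (c : ℤ) : chargeFun (vacuumMaya c) = c := by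
  rw [chargeFun_eq_card_filter_sub (vacuumMaya_eq_one_or_eq_neg_one c) (isMayaWindow_vacuumMaya c)
    (abs_nonneg c)]
  have := neg_abs_le c
  have := le_abs_self c
  have hfilter : {j ∈ Ico (-|c|) |c| | vacuumMaya c j = -1} = Ico (-c) |c| := by
    ext j
    rw [mem_filter, mem_Ico, mem_Ico, vacuumMaya]
    by_cases h : -c ≤ j <;> simp [h]
    omega
  rw [hfilter, Int.card_Ico]
  omega

lemma isMayaFun_mayaFun (lam : Partition') : IsMayaFun (mayaFun lam) := by
  obtain ⟨N, hN⟩ := lam.eventually_zero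
  refine isMayaFun_iff.mpr ⟨mayaFun_eq_one_or_eq_neg_one lam,
    eventually_atTop.mpr ⟨max N (lam.part 0), fun M hM => ⟨fun j hj => ?_, fun j hj => ?_⟩⟩⟩
  · refine (mayaFun_eq_neg_one_iff lam j).mpr ⟨j.toNat, ?_⟩
    rw [rowPos, hN _ (by omega)]
    omega
  · refine (mayaFun_eq_one_iff lam j).mpr ?_
    rintro ⟨k, rfl⟩
    have := lam.antitone 0 k k.zero_le
    simp only [rowPos] at hj
    omega

lemma chargeFun_mayaFun (lam : Partition') : chargeFun (mayaFun lam) = 0 := by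
  -- both sets are in bijection with the diagonal nodes `{k | k < λ_{k+1}}` of the Durfee square
  have hneg : {j : ℤ | j < 0 ∧ mayaFun lam j = -1} = rowPos lam '' {k | k < lam.part k} := by
    ext j
    simp only [Set.mem_ofPred_eq, Set.mem_image, mayaFun_eq_neg_one_iff, Set.mem_range]
    constructor
    · rintro ⟨hj, k, rfl⟩
      exact ⟨k, by simp only [rowPos] at hj; omega, rfl⟩
    · rintro ⟨k, hk, rfl⟩
      exact ⟨by simp only [rowPos]; omega, k, rfl⟩
  have hpos : {j : ℤ | 0 ≤ j ∧ mayaFun lam j = 1} =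
      (fun a : ℕ => (conj lam (a + 1) : ℤ) - (a + 1)) '' {a | a < lam.part a} := by
    ext j
    simp only [mayaFun, Set.mem_ofPred_eq, Set.mem_image, ite_eq_left_iff, not_exists]
    constructor
    · rintro ⟨hj, ha⟩
      by_contra! hne
      refine absurd (ha fun a h => hne a ?_ h.symm) (by norm_num)
      exact (lt_conj_succ_iff lam a a).mp (by omega)
    · rintro ⟨a, ha, rfl⟩
      have := (lt_conj_succ_iff lam a a).mpr ha
      exact ⟨by omega, fun h => absurd (h a rfl) (by norm_num)⟩
  have hcol : Function.Injective fun a : ℕ => (conj lam (a + 1) : ℤ) - (a + 1) := by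
    refine StrictAnti.injective (strictAnti_nat_of_succ_lt fun a => ?_)
    have : conj lam (a + 1 + 1) ≤ conj lam (a + 1) := le_of_forall_lt fun k hk =>
      (lt_conj_succ_iff lam a k).mpr (by have := (lt_conj_succ_iff lam (a + 1) k).mp hk; omega)
    push_cast
    omega
  rw [chargeFun, hneg, hpos, Set.ncard_image_of_injective _ (rowPos_strictMono lam).injective,
    Set.ncard_image_of_injective _ hcol, sub_self]

lemma exists_rowPos_eq {e : ℕ → ℤ} (he : StrictMono e) (hle : ∀ k, e k ≤ k) {N : ℕ}
    (hN : ∀ k, N ≤ k → e k = k) : ∃ lam : Partition', rowPos lam = e := by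
  refine ⟨⟨fun k => (k - e k).toNat, fun m n hmn =>
    antitone_nat_of_succ_le (f := fun k => (k - e k).toNat) (fun k => ?_) hmn,
    N, fun k hk => by simp [hN k hk]⟩, funext fun k => ?_⟩
  · have := he (show k < k + 1 by omega)
    push_cast
    omega
  · simp only [rowPos]
    have := hle k
    omega

lemma IsMayaWindow.nth_add_of_chargeFun_eq_zero {F : ℤ → ℤ} {M : ℕ}
    (hv : ∀ j, F j = 1 ∨ F j = -1) (hM : IsMayaWindow F M) (h0 : chargeFun F = 0) (d : ℕ) :
    Nat.nth (fun n : ℕ => F (n - M) = -1) (M + d) = 2 * M + d := by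
  set p : ℕ → Prop := fun n => F (n - M) = -1
  have hp : ∀ n, 2 * M ≤ n → p n := fun n hn => hM.1 _ (by omega)
  have hcount : Nat.count p (2 * M) = M := by
    have hcard := chargeFun_eq_card_filter_sub hv hM (by omega)
    have hshift : #{n ∈ range (2 * M) | p n} = #{j ∈ Ico (-(M : ℤ)) M | F j = -1} := by
      refine card_nbij' (fun n => n - M) (fun j => (j + M).toNat) ?_ ?_ ?_ ?_ <;>
        intro x hx <;> simp only [coe_filter, Set.mem_ofPred_eq, mem_range, mem_Ico, p] at hx ⊢
      · exact ⟨by omega, hx.2⟩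
      · exact ⟨by omega, by rw [show ((x + M).toNat : ℤ) - M = x by omega]; exact hx.2⟩
      · omega
      · omega
    rw [Nat.count_eq_card_filter_range]
    omega
  have hcount' : Nat.count p (2 * M + d) = M + d := by
    rw [Nat.count_add, hcount, Nat.count_of_forall fun k _ => hp _ (by omega)]
  rw [← hcount']
  exact Nat.nth_count (hp _ (by omega))

lemma IsMayaFun.exists_strictMono_range_eq {F : ℤ → ℤ} (hF : IsMayaFun F)
    (h0 : chargeFun F = 0) :
    ∃ e : ℕ → ℤ, StrictMono e ∧ Set.range e = {j | F j = -1} ∧ (∀ k, e k ≤ k) ∧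
      ∃ N : ℕ, ∀ k, N ≤ k → e k = k := by
  obtain ⟨M, hM0, hM⟩ := hF.eventually_isMayaWindow.exists
  lift M to ℕ using hM0
  -- enumerate the positions of `-1`, shifted by `M` so that they become natural numbers
  set p : ℕ → Prop := fun n => F (n - M) = -1
  have hinf : (Set.ofPred p).Infinite := Set.infinite_of_forall_exists_gt fun a =>
    ⟨max (a + 1) (2 * M), hM.1 _ (by omega), by omega⟩
  have hnth : ∀ d, Nat.nth p (M + d) = 2 * M + d := hM.nth_add_of_chargeFun_eq_zero hF.1 h0
  refine ⟨fun k => Nat.nth p k - M, fun a b hab => ?_, ?_, fun k => ?_, M, fun k hk => ?_⟩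
  · simpa using Nat.nth_strictMono hinf hab
  · ext j
    simp only [Set.mem_range, Set.mem_ofPred_eq]
    constructor
    · rintro ⟨k, rfl⟩
      exact Nat.nth_mem_of_infinite hinf k
    · intro hj
      have hjM : -(M : ℤ) ≤ j := not_lt.mp fun h => by simp [hM.2 j h] at hj
      obtain ⟨k, hk⟩ := Nat.subset_range_nth (p := p) (show p (j + M).toNat by
        simp only [p]; rwa [show ((j + M).toNat : ℤ) - M = j by omega])
      exact ⟨k, by simp only [hk]; omega⟩
  · have := (Nat.nth_strictMono hinf).add_le_nat M k
    rw [hnth] at this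
    simp only
    omega
  · have := hnth (k - M)
    rw [show M + (k - M) = k by omega] at this
    simp only [this]
    omega

lemma exists_mayaFun_eq {F : ℤ → ℤ} (hF : IsMayaFun F) (h0 : chargeFun F = 0) :
    ∃ lam : Partition', mayaFun lam = F := by
  obtain ⟨e, he, hrange, hle, N, hN⟩ := hF.exists_strictMono_range_eq h0
  obtain ⟨lam, rfl⟩ := exists_rowPos_eq he hle hN
  refine ⟨lam, funext fun j => ?_⟩
  rcases hF.1 j with h | h
  · rw [h, mayaFun_eq_one_iff, hrange, Set.mem_ofPred_eq, h]
    norm_num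
  · rw [h, mayaFun_eq_neg_one_iff, hrange]
    exact h

lemma mayaFun_partitionOfMaya {F : ℤ → ℤ} (hF : IsMayaFun F) (h0 : chargeFun F = 0) :
    mayaFun (partitionOfMaya F) = F := by
  have h := exists_mayaFun_eq hF h0
  rw [partitionOfMaya, dif_pos h]
  exact h.choose_spec

lemma ncard_inter_emod_eq (C : Set ℤ) {ℓ : ℕ} {i : ℤ} (hi0 : 0 ≤ i) (hi : i < ℓ) :
    (C ∩ {c | c % ℓ = i}).ncard = ((fun j => i + j * ℓ) ⁻¹' C).ncard := by
  have hℓ : (0 : ℤ) < ℓ := by omega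
  have hrange : Set.range (fun j : ℤ => i + j * ℓ) = {c | c % ℓ = i} := by
    ext c
    simp only [Set.mem_range, Set.mem_ofPred_eq]
    refine ⟨fun ⟨j, hj⟩ => hj ▸ ((Int.ediv_emod_unique (q := j) hℓ).mpr ⟨by ring, hi0, hi⟩).2,
      fun hc => ⟨c / ℓ, by rw [← hc, Int.emod_add_ediv_mul]⟩⟩
  rw [← hrange, ← Set.image_preimage_eq_inter_range, Set.ncard_image_of_injective _
    fun a b hab => (by simpa using hab : a = b ∨ ℓ = 0).resolve_right (by omega)]

lemma ncard_content_emod_eq {P : ℤ × ℤ → Prop} {C : Set ℤ}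
    (hinj : Set.InjOn (fun x : ℤ × ℤ => x.2 - x.1) {x | P x})
    (himage : (fun x : ℤ × ℤ => x.2 - x.1) '' {x | P x} = C) {ℓ : ℕ} {i : ℤ} (hi0 : 0 ≤ i)
    (hi : i < ℓ) :
    {x : ℤ × ℤ | P x ∧ (x.2 - x.1) % ℓ = i}.ncard = ((fun j => i + j * ℓ) ⁻¹' C).ncard := by
  change ({x | P x} ∩ (fun x : ℤ × ℤ => x.2 - x.1) ⁻¹' {c | c % ℓ = i}).ncard = _
  rw [← ncard_inter_emod_eq _ hi0 hi, ← himage, ← Set.image_inter_preimage,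
    (hinj.mono Set.inter_subset_left).ncard_image]

lemma ncard_addable_sub_ncard_removable_eq_chargeQuot_sub (lam : Partition') {ℓ : ℕ} {i : ℤ}
    (hi0 : 0 ≤ i) (hi : i < ℓ) :
    ({x : ℤ × ℤ | Addable lam x ∧ (x.2 - x.1) % ℓ = i}.ncard : ℤ) -
      {x : ℤ × ℤ | Removable lam x ∧ (x.2 - x.1) % ℓ = i}.ncard =
      chargeQuot ℓ lam i - chargeQuot ℓ lam (i - 1) := by
  have hℓ : 0 < ℓ := by omega
  have hA : {x : ℤ × ℤ | Addable lam x ∧ (x.2 - x.1) % ℓ = i}.ncard =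
      {j | quotFun (mayaFun lam) ℓ i j = -1 ∧ quotFun (mayaFun lam) ℓ (i - 1) j = 1}.ncard := by
    rw [ncard_content_emod_eq (content_injOn_addable lam) (content_image_addable lam) hi0 hi]
    simp only [quotFun, sub_add_eq_add_sub]
    rfl
  have hR : {x : ℤ × ℤ | Removable lam x ∧ (x.2 - x.1) % ℓ = i}.ncard =
      {j | quotFun (mayaFun lam) ℓ i j = 1 ∧ quotFun (mayaFun lam) ℓ (i - 1) j = -1}.ncard := by
    rw [ncard_content_emod_eq (content_injOn_removable lam) (content_image_removable lam) hi0 hi]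
    simp only [quotFun, sub_add_eq_add_sub]
    rfl
  rw [hA, hR]
  exact ncard_sub_ncard_eq_chargeFun_sub ((isMayaFun_mayaFun lam).quotFun hℓ i)
    ((isMayaFun_mayaFun lam).quotFun hℓ (i - 1))

lemma chargeQuot_neg_one (lam : Partition') {ℓ : ℕ} (hℓ : 0 < ℓ) :
    chargeQuot ℓ lam (-1) = chargeQuot ℓ lam (ℓ - 1) - 1 := by
  have hshift :
      quotFun (mayaFun lam) ℓ (-1) = fun j => quotFun (mayaFun lam) ℓ (ℓ - 1) (j - 1) := by
    funext j
    simp only [quotFun]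
    ring_nf
  exact (congrArg chargeFun hshift).trans
    (chargeFun_comp_sub_one ((isMayaFun_mayaFun lam).quotFun hℓ _))

lemma ncard_addable_sub_ncard_removable (lam : Partition') {ℓ i : ℕ} (hi : i < ℓ) :
    (Set.ncard {x | Addable lam x ∧ Int.emod (x.2 - x.1) (ℓ : ℤ) = (i : ℤ)} : ℤ) -
        (Set.ncard {x | Removable lam x ∧ Int.emod (x.2 - x.1) (ℓ : ℤ) = (i : ℤ)} : ℤ) =
      chargeQuot ℓ lam (i : ℤ) -
        chargeQuot ℓ lam ((if i = 0 then ℓ - 1 else i - 1 : ℕ) : ℤ) +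
        (if i = 0 then 1 else 0) := by
  refine (ncard_addable_sub_ncard_removable_eq_chargeQuot_sub lam (by omega) (by omega)).trans ?_
  rcases Nat.eq_zero_or_pos i with rfl | hi0
  · rw [if_pos rfl, if_pos rfl, Nat.cast_zero, zero_sub, chargeQuot_neg_one lam hi,
      Nat.cast_sub hi, Nat.cast_one]
    ring
  · rw [if_neg hi0.ne', if_neg hi0.ne', Nat.cast_sub hi0, Nat.cast_one, add_zero]

lemma chargeQuot_coreOf (lam : Partition') {ℓ i : ℕ} (hi : i < ℓ) :
    chargeQuot ℓ (coreOf ℓ lam) i = chargeQuot ℓ lam i := by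
  have hℓ : 0 < ℓ := by omega
  set G : ℤ → ℤ := fun j => vacuumMaya (chargeQuot ℓ lam (j % ℓ)) (j / ℓ)
  have hquot : ∀ r ∈ range ℓ, quotFun G ℓ r = vacuumMaya (chargeQuot ℓ lam r) := by
    intro r hr
    funext j
    have := (Int.ediv_emod_unique (b := ℓ) (by omega)).mpr
      ⟨show (r : ℤ) + ℓ * j = r + j * ℓ by ring, by omega, by simp at hr; omega⟩
    simp only [quotFun, G, this.1, this.2]
  have hG : IsMayaFun G :=
    isMayaFun_of_forall_quotFun hℓ fun r hr => hquot r hr ▸ isMayaFun_vacuumMaya _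
  have hG0 : chargeFun G = 0 := by
    rw [chargeFun_eq_sum_chargeFun_quotFun hG hℓ, ← chargeFun_mayaFun lam,
      chargeFun_eq_sum_chargeFun_quotFun (isMayaFun_mayaFun lam) hℓ]
    exact sum_congr rfl fun r hr => by rw [hquot r hr, chargeFun_vacuumMaya]; rfl
  change chargeFun (quotFun (mayaFun (partitionOfMaya G)) ℓ i) = _
  rw [mayaFun_partitionOfMaya hG hG0, hquot i (by simpa using hi), chargeFun_vacuumMaya]

end Wreath

theorem addable_minus_removable_general (ℓ : ℕ) :
    (∀ (lam : Partition') (i : ℕ), i < ℓ →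
      (Set.ncard {x | Addable lam x ∧ Int.emod (x.2 - x.1) (ℓ : ℤ) = (i : ℤ)} : ℤ) -
        (Set.ncard {x | Removable lam x ∧ Int.emod (x.2 - x.1) (ℓ : ℤ) = (i : ℤ)} : ℤ) =
      chargeQuot ℓ lam (i : ℤ) -
        chargeQuot ℓ lam ((if i = 0 then ℓ - 1 else i - 1 : ℕ) : ℤ) +
        (if i = 0 then 1 else 0)) ∧
    (∀ lam mu : Partition', coreOf ℓ lam = coreOf ℓ mu → ∀ i : ℕ, i < ℓ →
      (Set.ncard {x | Addable lam x ∧ Int.emod (x.2 - x.1) (ℓ : ℤ) = (i : ℤ)} : ℤ) -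
        (Set.ncard {x | Removable lam x ∧ Int.emod (x.2 - x.1) (ℓ : ℤ) = (i : ℤ)} : ℤ) =
      (Set.ncard {x | Addable mu x ∧ Int.emod (x.2 - x.1) (ℓ : ℤ) = (i : ℤ)} : ℤ) -
        (Set.ncard {x | Removable mu x ∧ Int.emod (x.2 - x.1) (ℓ : ℤ) = (i : ℤ)} : ℤ)) := by
  refine ⟨fun lam i hi => ncard_addable_sub_ncard_removable lam hi, fun lam mu hcore i hi => ?_⟩
  have hcharge : ∀ k < ℓ, chargeQuot ℓ lam k = chargeQuot ℓ mu k := fun k hk => by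
    rw [← chargeQuot_coreOf lam hk, hcore, chargeQuot_coreOf mu hk]
  rw [ncard_addable_sub_ncard_removable lam hi, ncard_addable_sub_ncard_removable mu hi,
    hcharge i hi, hcharge _ (by split_ifs <;> omega)]

theorem addable_minus_removable (ℓ : ℕ) (hℓ : 1 ≤ ℓ) :
    (∀ (lam : Partition') (i : ℕ), i < ℓ →
      (Set.ncard {x | Addable lam x ∧ Int.emod (x.2 - x.1) (ℓ : ℤ) = (i : ℤ)} : ℤ) -
        (Set.ncard {x | Removable lam x ∧ Int.emod (x.2 - x.1) (ℓ : ℤ) = (i : ℤ)} : ℤ) =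
      chargeQuot ℓ lam (i : ℤ) -
        chargeQuot ℓ lam ((if i = 0 then ℓ - 1 else i - 1 : ℕ) : ℤ) +
        (if i = 0 then 1 else 0)) ∧
    (∀ lam mu : Partition', coreOf ℓ lam = coreOf ℓ mu → ∀ i : ℕ, i < ℓ →
      (Set.ncard {x | Addable lam x ∧ Int.emod (x.2 - x.1) (ℓ : ℤ) = (i : ℤ)} : ℤ) -
        (Set.ncard {x | Removable lam x ∧ Int.emod (x.2 - x.1) (ℓ : ℤ) = (i : ℤ)} : ℤ) =
      (Set.ncard {x | Addable mu x ∧ Int.emod (x.2 - x.1) (ℓ : ℤ) = (i : ℤ)} : ℤ) -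
        (Set.ncard {x | Removable mu x ∧ Int.emod (x.2 - x.1) (ℓ : ℤ) = (i : ℤ)} : ℤ)) :=
  addable_minus_removable_general ℓ
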